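/- Let K be a field and G a subgroup of the multiplicative group K^×. Suppose there exists a valuation subring O of K with O^× ⊆ G (the group case). Then: (1) O_G^× ⊆ G; (2) O_G is the unique valuation subring of K that is coarsely compatible with G and has unit group contained in G; and (3) every valuation subring of K that is weakly compatible with G is compatible with G. -/

import Mathlib

/-!
If `y` lies in an ideal `A` of `O` with `1 + A ⊆ G` but not in `O₀`, where `O₀ˣ ⊆ G`, then
`1 + y⁻¹ ∈ 1 + M(O₀) ⊆ G`, so `y = (1 + y) / (1 + y⁻¹) ∈ G`. If moreover `O₀ ⊄ O` and `√A = M(O)`,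
then every unit `u` of `O ⊔ O₀` lying in `O` is a quotient `(u d) / d` of two such elements. Indeed,
for a unit `c` of `O ⊔ O₀` the additive group `{y | c y A ⊆ O₀}` is stable under `O` and `O₀`,
hence under `O ⊔ O₀`, so it cannot contain `1` unless `O ≤ O₀`; take `c = u` or `c = 1`.
Hence `(O ⊔ O₀)ˣ ⊆ G`.

Starting from `Oˣ ⊆ G`, the overrings of `O` with unit group in `G` form a chain, whose union `M`
is the coarsest of them. For a weakly compatible `O'` either `M ≤ O'`, or `(O' ⊔ M)ˣ ⊆ G`. This
shows that every coarsely compatible ring contains `M`, so that `O_G = M`, and that every weakly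
compatible `O'` is compatible: `1 + M(O') ⊆ 1 + M(M)` in the first case and
`1 + M(O') ⊆ (O' ⊔ M)ˣ` in the second.
-/

/-- `O` is compatible with the multiplicative subgroup `G ≤ Kˣ` if `1 + M(O) ⊆ G`. -/
def Compatible {K : Type*} [Field K] (O : ValuationSubring K) (G : Subgroup Kˣ) : Prop :=
  ∀ m : O, m ∈ IsLocalRing.maximalIdeal O → ∃ u ∈ G, (u : K) = 1 + (m : K)

/-- `O` is weakly compatible with `G` if there is an ideal `A` of `O` with radical the
maximal ideal and `1 + A ⊆ G`. -/
def WeaklyCompatible {K : Type*} [Field K] (O : ValuationSubring K) (G : Subgroup Kˣ) : Prop :=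
  ∃ A : Ideal O, A.radical = IsLocalRing.maximalIdeal O ∧ ∀ a ∈ A, ∃ u ∈ G, (u : K) = 1 + (a : K)

/-- `O` is coarsely compatible with `G` if it is weakly compatible with `G` and no valuation
subring properly containing `O` has its unit group contained in `G`. -/
def CoarselyCompatible {K : Type*} [Field K] (O : ValuationSubring K) (G : Subgroup Kˣ) : Prop :=
  WeaklyCompatible O G ∧ ∀ O' : ValuationSubring K, O < O' → ¬ (O'.unitGroup ≤ G)

open IsLocalRing

namespace ValuationSubring

variable {K : Type*} [Field K]

theorem mem_unitGroup_iff_mem_and_inv_mem {A : ValuationSubring K} (x : Kˣ) :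
    x ∈ A.unitGroup ↔ (x : K) ∈ A ∧ (x : K)⁻¹ ∈ A := by
  rw [mem_unitGroup_iff, le_antisymm_iff, A.valuation.one_le_val_iff x.ne_zero,
    valuation_le_one_iff, valuation_le_one_iff]

theorem le_total_of_le {A B C : ValuationSubring K} (hB : A ≤ B) (hC : A ≤ C) :
    B ≤ C ∨ C ≤ B :=
  le_total (⟨B, hB⟩ : {S // A ≤ S}) ⟨C, hC⟩

theorem mul_notMem {A : ValuationSubring K} {x y : K} (hx : x ∉ A) (hy : y ∉ A) :
    x * y ∉ A := fun hxy => hx <| by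
  have hy0 : y ≠ 0 := fun h => hy (h ▸ A.zero_mem)
  simpa [hy0] using A.mul_mem _ _ hxy ((A.mem_or_inv_mem y).resolve_left hy)

theorem mul_mem_of_mem_sup {O O₀ : ValuationSubring K} {T : AddSubgroup K}
    (hO : ∀ s ∈ O, ∀ y ∈ T, s * y ∈ T) (hO₀ : ∀ s ∈ O₀, ∀ y ∈ T, s * y ∈ T)
    {s : K} (hs : s ∈ O ⊔ O₀) {y : K} (hy : y ∈ T) : s * y ∈ T := by
  let S : Subring K :=
    { carrier := {s | ∀ y ∈ T, s * y ∈ T}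
      mul_mem' := fun ha hb y hy => by rw [mul_assoc]; exact ha _ (hb y hy)
      one_mem' := fun y hy => by rwa [one_mul]
      add_mem' := fun ha hb y hy => by rw [add_mul]; exact T.add_mem (ha y hy) (hb y hy)
      zero_mem' := fun y _ => by rw [zero_mul]; exact T.zero_mem
      neg_mem' := fun ha y hy => by rw [neg_mul]; exact T.neg_mem (ha y hy) }
  exact (sup_le (show O.toSubring ≤ S from hO) (show O₀.toSubring ≤ S from hO₀) :
    O.toSubring ⊔ O₀.toSubring ≤ S) hs y hy

end ValuationSubring

section Compatibility

variable {K : Type*} [Field K] {G : Subgroup Kˣ}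

theorem compatible_of_le_of_unitGroup_le {O W : ValuationSubring K} (hOW : O ≤ W)
    (hW : W.unitGroup ≤ G) : Compatible O G := by
  intro m hm
  have h1 : O.valuation (1 + m) = 1 :=
    O.valuation.map_one_add_of_lt ((O.valuation_lt_one_iff m).mp hm)
  have h0 : (1 + m : K) ≠ 0 := fun h => by simp [h] at h1
  exact ⟨Units.mk0 _ h0, hW (ValuationSubring.unitGroup_le_unitGroup.mpr hOW h1), rfl⟩

theorem Compatible.mono {O O' : ValuationSubring K} (h : Compatible O G) (hOO' : O ≤ O') :
    Compatible O' G := by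
  intro m hm
  have hm' : (m : K) ∈ O.nonunits :=
    ValuationSubring.nonunits_le_nonunits.mpr hOO' (ValuationSubring.coe_mem_nonunits_iff.mpr hm)
  obtain ⟨hmO, hm'⟩ := ValuationSubring.mem_nonunits_iff_exists_mem_maximalIdeal.mp hm'
  exact h ⟨m, hmO⟩ hm'

theorem Compatible.weaklyCompatible {O : ValuationSubring K} (h : Compatible O G) :
    WeaklyCompatible O G :=
  ⟨maximalIdeal O, (maximalIdeal.isMaximal O).isPrime.radical, h⟩

theorem mem_of_mem_ideal_of_notMem {O O₀ : ValuationSubring K} {A : Ideal O}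
    (hA : ∀ a ∈ A, ∃ u ∈ G, (u : K) = 1 + a) (hO₀ : O₀.unitGroup ≤ G)
    {x : Kˣ} (hxA : ∃ a ∈ A, (a : K) = x) (hx : (x : K) ∉ O₀) : x ∈ G := by
  obtain ⟨a, ha, hax⟩ := hxA
  obtain ⟨u, hu, hua⟩ := hA a ha
  have hv : O₀.valuation (x : K)⁻¹ < 1 :=
    O₀.mem_nonunits_iff.mp (O₀.inv_mem_nonunits_iff.mpr (Or.inr hx))
  have hux : u * x⁻¹ ∈ O₀.unitGroup := by
    rw [ValuationSubring.mem_unitGroup_iff, Units.val_mul, hua, hax, Units.val_inv_eq_inv_val,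
      add_mul, one_mul, mul_inv_cancel₀ x.ne_zero, add_comm]
    exact O₀.valuation.map_one_add_of_lt hv
  simpa using G.mul_mem (G.inv_mem (hO₀ hux)) hu

theorem exists_mem_ideal_inv_mem {O O₀ : ValuationSubring K} {A : Ideal O}
    (hA : A.radical = maximalIdeal O) (h : ¬ O₀ ≤ O) :
    ∃ a ∈ A, (a : K) ≠ 0 ∧ (a : K)⁻¹ ∈ O₀ := by
  obtain ⟨y, hy₀, hy⟩ := SetLike.not_le_iff_exists.mp h
  have hy0 : y ≠ 0 := fun h => hy (h ▸ O.zero_mem)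
  obtain ⟨hyO, hym⟩ := ValuationSubring.mem_nonunits_iff_exists_mem_maximalIdeal.mp
    (O.inv_mem_nonunits_iff.mpr (Or.inr hy))
  rw [← hA] at hym
  obtain ⟨n, hn⟩ := hym
  exact ⟨_, hn, by simp [hy0], by simpa using O₀.pow_mem hy₀ n⟩

theorem exists_mem_ideal_mul_notMem {O O₀ : ValuationSubring K} {A : Ideal O} {a₀ : O}
    (ha₀A : a₀ ∈ A) (ha₀ : (a₀ : K) ≠ 0) (ha₀' : (a₀ : K)⁻¹ ∈ O₀) (h : ¬ O ≤ O₀)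
    {c : K} (hc : c ≠ 0) (hc' : c⁻¹ ∈ O ⊔ O₀) : ∃ a ∈ A, c * a ∉ O₀ := by
  by_contra! hcA
  let T : AddSubgroup K :=
    { carrier := {y | ∀ a ∈ A, c * y * a ∈ O₀}
      add_mem' := fun hy hz a ha => by
        rw [mul_add, add_mul]; exact O₀.add_mem _ _ (hy a ha) (hz a ha)
      zero_mem' := fun a _ => by simp
      neg_mem' := fun hy a ha => by rw [mul_neg, neg_mul]; exact O₀.neg_mem _ (hy a ha) }
  have hT : ∀ s ∈ O ⊔ O₀, s ∈ T := fun s hs => by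
    refine mul_one s ▸ ValuationSubring.mul_mem_of_mem_sup (T := T) ?_ ?_ hs (y := 1)
      fun a ha => by simpa using hcA a ha
    · intro s hs y hy a ha
      convert hy _ (A.mul_mem_left ⟨s, hs⟩ ha) using 1
      push_cast; ring
    · intro s hs y hy a ha
      convert O₀.mul_mem _ _ hs (hy a ha) using 1
      ring
  refine h fun z hz => ?_
  have hzO : z ∈ O ⊔ O₀ := (le_sup_left : O ≤ O ⊔ O₀) hz
  have ha₀O : (a₀ : K)⁻¹ ∈ O ⊔ O₀ := (le_sup_right : O₀ ≤ O ⊔ O₀) ha₀'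
  convert hT _ (mul_mem (mul_mem hzO hc') ha₀O) a₀ ha₀A using 1
  field_simp

theorem WeaklyCompatible.unitGroup_sup_le {O O₀ : ValuationSubring K}
    (hw : WeaklyCompatible O G) (hO₀ : O₀.unitGroup ≤ G) (h : ¬ O₀ ≤ O) :
    (O ⊔ O₀).unitGroup ≤ G := by
  by_cases hOO₀ : O ≤ O₀
  · rwa [sup_eq_right.mpr hOO₀]
  obtain ⟨A, hA, hA1⟩ := hw
  obtain ⟨a₀, ha₀A, ha₀, ha₀'⟩ := exists_mem_ideal_inv_mem hA h
  have key : ∀ u ∈ (O ⊔ O₀).unitGroup, (u : K) ∈ O → u ∈ G := by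
    intro u hu huO
    rw [ValuationSubring.mem_unitGroup_iff_mem_and_inv_mem] at hu
    obtain ⟨d, hdA, hd, hud⟩ : ∃ d ∈ A, (d : K) ∉ O₀ ∧ (u : K) * d ∉ O₀ := by
      by_cases hu₀ : (u : K) ∈ O₀
      · obtain ⟨d, hdA, hud⟩ := exists_mem_ideal_mul_notMem ha₀A ha₀ ha₀' hOO₀ u.ne_zero hu.2
        exact ⟨d, hdA, fun hd => hud (O₀.mul_mem _ _ hu₀ hd), hud⟩
      · obtain ⟨d, hdA, hd⟩ := exists_mem_ideal_mul_notMem ha₀A ha₀ ha₀' hOO₀ one_ne_zero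
          (by simp)
        rw [one_mul] at hd
        exact ⟨d, hdA, hd, ValuationSubring.mul_notMem hu₀ hd⟩
    have hd0 : (d : K) ≠ 0 := fun h0 => hd (h0 ▸ O₀.zero_mem)
    have hdG := mem_of_mem_ideal_of_notMem hA1 hO₀ (x := Units.mk0 _ hd0) ⟨d, hdA, rfl⟩ hd
    have hudG := mem_of_mem_ideal_of_notMem hA1 hO₀ (x := u * Units.mk0 _ hd0)
      ⟨⟨u, huO⟩ * d, A.mul_mem_left _ hdA, rfl⟩ hud
    simpa using G.mul_mem hudG (G.inv_mem hdG)
  intro u hu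
  rcases O.mem_or_inv_mem u with huO | huO
  · exact key u hu huO
  · simpa using G.inv_mem (key u⁻¹ (inv_mem hu) (by simpa using huO))

theorem exists_isGreatest_overring_unitGroup_le {O : ValuationSubring K}
    (hO : O.unitGroup ≤ G) :
    ∃ M, IsGreatest {W : ValuationSubring K | O ≤ W ∧ W.unitGroup ≤ G} M := by
  set S := {W : ValuationSubring K | O ≤ W ∧ W.unitGroup ≤ G}
  have hOS : O ∈ S := ⟨le_rfl, hO⟩
  have hdir : DirectedOn (· ≤ ·) (ValuationSubring.toSubring '' S) := by
    rintro _ ⟨W₁, hW₁, rfl⟩ _ ⟨W₂, hW₂, rfl⟩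
    rcases ValuationSubring.le_total_of_le hW₁.1 hW₂.1 with h | h
    · exact ⟨_, ⟨W₂, hW₂, rfl⟩, h, le_rfl⟩
    · exact ⟨_, ⟨W₁, hW₁, rfl⟩, le_rfl, h⟩
  let M := O.ofLE (sSup (ValuationSubring.toSubring '' S)) (le_sSup ⟨O, hOS, rfl⟩)
  have hmem (x : K) : x ∈ M ↔ ∃ W ∈ S, x ∈ W :=
    (Subring.mem_sSup_of_directedOn (S := ValuationSubring.toSubring '' S) ⟨_, O, hOS, rfl⟩
      hdir).trans (by simp)
  refine ⟨M, ⟨fun x hx => (hmem x).2 ⟨O, hOS, hx⟩, fun u hu => ?_⟩,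
    fun W hW x hx => (hmem x).2 ⟨W, hW, hx⟩⟩
  rw [ValuationSubring.mem_unitGroup_iff_mem_and_inv_mem, hmem, hmem] at hu
  obtain ⟨⟨W₁, hW₁, hu₁⟩, ⟨W₂, hW₂, hu₂⟩⟩ := hu
  rcases ValuationSubring.le_total_of_le hW₁.1 hW₂.1 with h | h
  · exact hW₂.2 ((ValuationSubring.mem_unitGroup_iff_mem_and_inv_mem u).2 ⟨h hu₁, hu₂⟩)
  · exact hW₁.2 ((ValuationSubring.mem_unitGroup_iff_mem_and_inv_mem u).2 ⟨hu₁, h hu₂⟩)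

end Compatibility

theorem group_case_OG
    {K : Type*} [Field K] (G : Subgroup Kˣ)
    (hgroup : ∃ O : ValuationSubring K, O.unitGroup ≤ G)
    (R : ValuationSubring K)
    (hR : (R : Set K) = ⋂ O ∈ {O : ValuationSubring K | CoarselyCompatible O G}, (O : Set K)) :
    R.unitGroup ≤ G ∧
    (CoarselyCompatible R G ∧
      ∀ O' : ValuationSubring K, CoarselyCompatible O' G → O'.unitGroup ≤ G → O' = R) ∧
    (∀ O' : ValuationSubring K, WeaklyCompatible O' G → Compatible O' G) := by
  obtain ⟨O, hO⟩ := hgroup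
  obtain ⟨M, ⟨hOM, hMG⟩, hMmax⟩ := exists_isGreatest_overring_unitGroup_le hO
  have hMc : Compatible M G := compatible_of_le_of_unitGroup_le le_rfl hMG
  have hMcoarse : CoarselyCompatible M G :=
    ⟨hMc.weaklyCompatible, fun W hMW hWG => hMW.not_ge (hMmax ⟨hOM.trans hMW.le, hWG⟩)⟩
  have hM_le (O' : ValuationSubring K) (h : CoarselyCompatible O' G) : M ≤ O' := by
    by_contra hMO'
    refine h.2 _ (lt_of_le_of_ne le_sup_left fun he => hMO' ?_) (h.1.unitGroup_sup_le hMG hMO')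
    exact he ▸ le_sup_right
  obtain rfl : R = M := SetLike.coe_injective <| hR.trans <| Set.Subset.antisymm
    (Set.biInter_subset_of_mem hMcoarse) (Set.subset_iInter₂ hM_le)
  refine ⟨hMG, ⟨hMcoarse, fun O' h hO'G => ?_⟩, fun O' hw => ?_⟩
  · exact le_antisymm (hMmax ⟨hOM.trans (hM_le O' h), hO'G⟩) (hM_le O' h)
  · by_cases hMO' : R ≤ O'
    · exact hMc.mono hMO'
    · exact compatible_of_le_of_unitGroup_le le_sup_left (hw.unitGroup_sup_le hMG hMO')
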